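/- Let A, B, C be bounded operators on a Hilbert space with AC = CA = 0 and ABA = 0, and let G := A + τ^{1/2}B + τC for τ ∈ (0,1). Then for every n ≥ 2, G^n = A^n + τ^{1/2}(BA^{n−1} + A^{n−1}B) + [n ≥ 3]·τ·B A^{n−2} B + τ·Σ_{j=0}^{n−2} A^j B² A^{n−2−j} + τ^{3/2} D_n, where D_n is a bounded operator with ‖D_n‖ ≤ 3ⁿ cⁿ for c := max(‖A‖, ‖B‖, ‖C‖, 1). -/

import Mathlib

/-!
Write `s = √τ`, so that `G = A + s B + s² C` and `Gⁿ = Mₙ + s³ Dₙ`, where `Mₙ` collects the terms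
of order `s⁰, s¹, s²` of the claimed expansion. The relations `AC = CA = 0`, `ABA = 0` give
`Mₙ G = Mₙ₊₁ + s³ Eₙ` with `‖Eₙ‖ ≤ (2n + 1) cⁿ⁺¹`, so `Dₙ₊₁ = Dₙ G + Eₙ`. Since `‖G‖ ≤ 3c` for
`|s| ≤ 1`, induction from `D₂ = BC + CB + s C²` gives `‖Dₙ‖ ≤ (3ⁿ - n - 2) cⁿ`.
-/

open Finset

namespace OperatorExpansion

section Ring

variable {𝕜 R : Type*} [CommRing 𝕜] [Ring R] [Algebra 𝕜 R]

def perturbed (A B C : R) (s : 𝕜) : R := A + s • B + s ^ 2 • C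

def firstOrder (A B : R) (n : ℕ) : R := B * A ^ (n - 1) + A ^ (n - 1) * B

def secondOrder (A B : R) (n : ℕ) : R :=
  (if 3 ≤ n then B * A ^ (n - 2) * B else 0) +
    ∑ j ∈ range (n - 1), A ^ j * B ^ 2 * A ^ (n - 2 - j)

def mainPart (A B : R) (s : 𝕜) (n : ℕ) : R :=
  A ^ n + s • firstOrder A B n + s ^ 2 • secondOrder A B n

def mainPartDefect (A B C : R) (s : 𝕜) (n : ℕ) : R :=
  secondOrder A B n * B + A ^ (n - 1) * B * C + s • (secondOrder A B n * C)

variable {A B C : R}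

theorem firstOrder_add_two (n : ℕ) :
    firstOrder A B (n + 2) = B * A ^ (n + 1) + A ^ (n + 1) * B := rfl

theorem secondOrder_two : secondOrder A B 2 = B ^ 2 := by
  simp [secondOrder]

theorem secondOrder_add_three (n : ℕ) :
    secondOrder A B (n + 3) =
      B * A ^ (n + 1) * B + ∑ j ∈ range (n + 2), A ^ j * B ^ 2 * A ^ (n + 1 - j) := by
  simp [secondOrder]

theorem pow_succ_mul_eq_zero (hAC : A * C = 0) (n : ℕ) : A ^ (n + 1) * C = 0 := by
  rw [pow_succ, mul_assoc, hAC, mul_zero]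

theorem pow_succ_mul_mul_eq_zero (hABA : A * B * A = 0) (n : ℕ) : A ^ (n + 1) * B * A = 0 := by
  rw [pow_succ, mul_assoc, mul_assoc, ← mul_assoc A, hABA, mul_zero]

theorem firstOrder_mul_self (hABA : A * B * A = 0) (n : ℕ) :
    firstOrder A B (n + 2) * A = B * A ^ (n + 2) := by
  rw [firstOrder_add_two, add_mul, pow_succ_mul_mul_eq_zero hABA, add_zero, mul_assoc, ← pow_succ]

theorem firstOrder_mul_of_mul_eq_zero (hAC : A * C = 0) (n : ℕ) :
    firstOrder A B (n + 2) * C = A ^ (n + 1) * B * C := by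
  rw [firstOrder_add_two, add_mul, mul_assoc B, pow_succ_mul_eq_zero hAC, mul_zero, zero_add]

theorem secondOrder_mul_self (hABA : A * B * A = 0) (n : ℕ) :
    secondOrder A B (n + 2) * A = ∑ j ∈ range (n + 1), A ^ j * B ^ 2 * A ^ (n + 1 - j) := by
  have hBAB : (if 3 ≤ n + 2 then B * A ^ n * B else 0) * A = 0 := by
    rcases n with _ | n
    · simp
    · rw [if_pos (by omega), mul_assoc, mul_assoc, ← mul_assoc (A ^ _),
        pow_succ_mul_mul_eq_zero hABA, mul_zero]
  simp only [secondOrder, Nat.add_sub_cancel, add_mul, hBAB, zero_add, sum_mul]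
  refine sum_congr rfl fun j hj => ?_
  rw [mul_assoc, ← pow_succ, Nat.sub_add_comm (by simpa [Nat.lt_succ_iff] using hj)]

theorem secondOrder_succ (hABA : A * B * A = 0) (n : ℕ) :
    secondOrder A B (n + 3) = secondOrder A B (n + 2) * A + firstOrder A B (n + 2) * B := by
  rw [secondOrder_add_three, secondOrder_mul_self hABA, firstOrder_add_two, sum_range_succ]
  simp only [Nat.sub_self, pow_zero, mul_one, add_mul, mul_assoc, sq]
  abel

theorem perturbed_sq (hAC : A * C = 0) (hCA : C * A = 0) (s : 𝕜) :
    perturbed A B C s ^ 2 = mainPart A B s 2 + s ^ 3 • (B * C + C * B + s • (C * C)) := by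
  simp only [perturbed, mainPart, firstOrder_add_two (n := 0), secondOrder_two, sq, mul_add,
    add_mul, smul_mul_assoc, mul_smul_comm, hAC, hCA, zero_add, pow_one, smul_zero, add_zero]
  module

theorem mainPart_mul_perturbed (hAC : A * C = 0) (hABA : A * B * A = 0) (s : 𝕜) (n : ℕ) :
    mainPart A B s (n + 2) * perturbed A B C s =
      mainPart A B s (n + 3) + s ^ 3 • mainPartDefect A B C s (n + 2) := by
  simp only [perturbed, mainPart, mainPartDefect, show n + 2 - 1 = n + 1 from rfl,
    secondOrder_succ hABA, firstOrder_add_two (n + 1), mul_add, add_mul, smul_mul_assoc,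
    mul_smul_comm, firstOrder_mul_self hABA, firstOrder_mul_of_mul_eq_zero hAC,
    pow_succ_mul_eq_zero hAC, ← pow_succ]
  module

end Ring

section Norm

variable {R : Type*} [SeminormedRing R] {A B C x : R} {c r : ℝ}

theorem norm_pow_mul_le_of_le (hA : ‖A‖ ≤ c) (hx : ‖x‖ ≤ r) (n : ℕ) :
    ‖A ^ n * x‖ ≤ c ^ n * r := by
  induction n with
  | zero => simpa using hx
  | succ n ih =>
    rw [pow_succ', mul_assoc, pow_succ', mul_assoc]
    exact norm_mul_le_of_le hA ih

theorem norm_mul_pow_le_of_le (hx : ‖x‖ ≤ r) (hA : ‖A‖ ≤ c) (n : ℕ) :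
    ‖x * A ^ n‖ ≤ r * c ^ n := by
  induction n with
  | zero => simpa using hx
  | succ n ih =>
    rw [pow_succ, ← mul_assoc, pow_succ, ← mul_assoc]
    exact norm_mul_le_of_le ih hA

theorem norm_secondOrder_le (hA : ‖A‖ ≤ c) (hB : ‖B‖ ≤ c) (n : ℕ) :
    ‖secondOrder A B (n + 2)‖ ≤ (n + 2) * c ^ (n + 2) := by
  have hc : 0 ≤ c := (norm_nonneg A).trans hA
  have hBAB : ‖(if 3 ≤ n + 2 then B * A ^ n * B else 0)‖ ≤ c ^ (n + 2) := by
    split_ifs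
    · calc ‖B * A ^ n * B‖ ≤ c * c ^ n * c :=
            norm_mul_le_of_le (norm_mul_pow_le_of_le hB hA n) hB
        _ = c ^ (n + 2) := by ring
    · simpa using pow_nonneg hc _
  have hsum : ‖∑ j ∈ range (n + 1), A ^ j * B ^ 2 * A ^ (n - j)‖ ≤ (n + 1) * c ^ (n + 2) := by
    calc _ ≤ ∑ j ∈ range (n + 1), c ^ (n + 2) := norm_sum_le_of_le _ fun j hj => ?_
      _ = (n + 1) * c ^ (n + 2) := by simp
    have hB2 : ‖B ^ 2‖ ≤ c ^ 2 := by simpa [sq] using norm_mul_le_of_le hB hB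
    calc ‖A ^ j * B ^ 2 * A ^ (n - j)‖ ≤ c ^ j * c ^ 2 * c ^ (n - j) :=
          norm_mul_pow_le_of_le (norm_pow_mul_le_of_le hA hB2 j) hA _
      _ = c ^ (n + 2) := by
        rw [← pow_add, ← pow_add]
        have := mem_range.mp hj
        congr 1
        omega
  calc ‖secondOrder A B (n + 2)‖ ≤ c ^ (n + 2) + (n + 1) * c ^ (n + 2) :=
        (norm_add_le _ _).trans (add_le_add hBAB hsum)
    _ = (n + 2) * c ^ (n + 2) := by ring

variable [NormedAlgebra ℝ R] {s : ℝ}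

theorem norm_perturbed_le (hs : |s| ≤ 1) : ‖perturbed A B C s‖ ≤ ‖A‖ + ‖B‖ + ‖C‖ := by
  have hs2 : |s ^ 2| ≤ 1 := by simpa [abs_pow] using pow_le_one₀ (n := 2) (abs_nonneg s) hs
  refine norm_add₃_le.trans (add_le_add (add_le_add le_rfl ?_) ?_) <;>
    rw [norm_smul, Real.norm_eq_abs] <;> exact mul_le_of_le_one_left (norm_nonneg _) ‹_›

theorem norm_mainPartDefect_le (hA : ‖A‖ ≤ c) (hB : ‖B‖ ≤ c) (hC : ‖C‖ ≤ c) (hs : |s| ≤ 1)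
    (n : ℕ) : ‖mainPartDefect A B C s (n + 2)‖ ≤ (2 * n + 5) * c ^ (n + 3) := by
  have hc : 0 ≤ c := (norm_nonneg A).trans hA
  have hQ := norm_secondOrder_le hA hB n
  have hsQC : ‖s • (secondOrder A B (n + 2) * C)‖ ≤ (n + 2) * c ^ (n + 2) * c := by
    rw [norm_smul, Real.norm_eq_abs]
    exact (mul_le_of_le_one_left (norm_nonneg _) hs).trans (norm_mul_le_of_le hQ hC)
  calc ‖mainPartDefect A B C s (n + 2)‖
      ≤ (n + 2) * c ^ (n + 2) * c + c ^ (n + 1) * c * c + (n + 2) * c ^ (n + 2) * c :=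
        norm_add₃_le.trans (add_le_add (add_le_add (norm_mul_le_of_le hQ hB)
          (norm_mul_le_of_le (norm_pow_mul_le_of_le hA hB (n + 1)) hC)) hsQC)
    _ = (2 * n + 5) * c ^ (n + 3) := by ring

theorem exists_perturbed_pow_eq (hAC : A * C = 0) (hCA : C * A = 0) (hABA : A * B * A = 0)
    (hA : ‖A‖ ≤ c) (hB : ‖B‖ ≤ c) (hC : ‖C‖ ≤ c) (hs : |s| ≤ 1) (n : ℕ) :
    ∃ D : R, perturbed A B C s ^ (n + 2) = mainPart A B s (n + 2) + s ^ 3 • D ∧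
      ‖D‖ ≤ (3 ^ (n + 2) - (n + 4)) * c ^ (n + 2) := by
  have hc : 0 ≤ c := (norm_nonneg A).trans hA
  induction n with
  | zero =>
    refine ⟨_, perturbed_sq hAC hCA s, ?_⟩
    have hsCC : ‖s • (C * C)‖ ≤ c * c := by
      rw [norm_smul, Real.norm_eq_abs]
      exact (mul_le_of_le_one_left (norm_nonneg _) hs).trans (norm_mul_le_of_le hC hC)
    calc _ ≤ c * c + c * c + c * c :=
          norm_add₃_le.trans (add_le_add (add_le_add (norm_mul_le_of_le hB hC)
            (norm_mul_le_of_le hC hB)) hsCC)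
      _ ≤ _ := by norm_num; nlinarith [mul_self_nonneg c]
  | succ n ih =>
    obtain ⟨D, hD, hDn⟩ := ih
    refine ⟨D * perturbed A B C s + mainPartDefect A B C s (n + 2), ?_, ?_⟩
    · rw [pow_succ, hD, add_mul, mainPart_mul_perturbed hAC hABA, smul_mul_assoc, smul_add]
      abel
    have hG : ‖perturbed A B C s‖ ≤ 3 * c := (norm_perturbed_le hs).trans (by linarith)
    calc _ ≤ (3 ^ (n + 2) - (n + 4)) * c ^ (n + 2) * (3 * c) + (2 * n + 5) * c ^ (n + 3) :=
          (norm_add_le _ _).trans (add_le_add (norm_mul_le_of_le hDn hG)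
            (norm_mainPartDefect_le hA hB hC hs n))
      _ = (3 ^ (n + 3) - (n + 7)) * c ^ (n + 3) := by ring
      _ ≤ _ := mul_le_mul_of_nonneg_right (by push_cast; linarith) (by positivity)

end Norm

end OperatorExpansion

open OperatorExpansion in
theorem operator_expansion_estimate_general {H : Type*} [NormedAddCommGroup H]
    [InnerProductSpace ℂ H]
    (A B C : H →L[ℂ] H) (hAC : A * C = 0) (hCA : C * A = 0) (hABA : A * B * A = 0)
    (τ : ℝ) (hτ : τ ∈ Set.Ioo (0 : ℝ) 1) :
    ∀ n : ℕ, 2 ≤ n → ∃ D : H →L[ℂ] H,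
      (A + Real.sqrt τ • B + τ • C) ^ n =
        A ^ n + Real.sqrt τ • (B * A ^ (n - 1) + A ^ (n - 1) * B) +
          (if 3 ≤ n then τ else 0) • (B * A ^ (n - 2) * B) +
          τ • (∑ j ∈ Finset.range (n - 1), A ^ j * B ^ 2 * A ^ (n - 2 - j)) +
          (τ * Real.sqrt τ) • D ∧
      ‖D‖ ≤ 3 ^ n * max (max ‖A‖ ‖B‖) (max ‖C‖ 1) ^ n := by
  intro n hn
  obtain ⟨m, rfl⟩ := Nat.exists_eq_add_of_le' hn
  have hsq : √τ ^ 2 = τ := Real.sq_sqrt hτ.1.le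
  have hs : |√τ| ≤ 1 := by
    rw [abs_of_nonneg (Real.sqrt_nonneg τ)]
    exact Real.sqrt_le_one.mpr hτ.2.le
  obtain ⟨D, hD, hDn⟩ := exists_perturbed_pow_eq hAC hCA hABA
    (c := max (max ‖A‖ ‖B‖) (max ‖C‖ 1)) (by bound) (by bound) (by bound) hs m
  refine ⟨D, ?_, hDn.trans ?_⟩
  · rw [perturbed, hsq] at hD
    rw [hD, show √τ ^ 3 = τ * √τ by rw [pow_succ, hsq]]
    simp only [mainPart, firstOrder, secondOrder, hsq, smul_add, ite_smul, smul_ite, zero_smul,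
      smul_zero, add_assoc]
  · gcongr
    linarith

/-- Key operator-expansion estimate: if `A`, `B`, `C` are bounded operators on a
Hilbert space with `AC = CA = 0` and `ABA = 0`, and `G = A + √τ·B + τ·C` with
`τ ∈ (0,1)`, then for every `n ≥ 2`,
`Gⁿ = Aⁿ + √τ(BA^{n−1} + A^{n−1}B) + [n ≥ 3]·τ·BA^{n−2}B
      + τ·∑_{j=0}^{n−2} Aʲ B² A^{n−2−j} + τ^{3/2} Dₙ`
with `‖Dₙ‖ ≤ 3ⁿ cⁿ` where `c = max(‖A‖, ‖B‖, ‖C‖, 1)`. -/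
theorem operator_expansion_estimate {H : Type*} [NormedAddCommGroup H]
    [InnerProductSpace ℂ H] [CompleteSpace H]
    (A B C : H →L[ℂ] H) (hAC : A * C = 0) (hCA : C * A = 0) (hABA : A * B * A = 0)
    (τ : ℝ) (hτ : τ ∈ Set.Ioo (0 : ℝ) 1) :
    ∀ n : ℕ, 2 ≤ n → ∃ D : H →L[ℂ] H,
      (A + Real.sqrt τ • B + τ • C) ^ n =
        A ^ n + Real.sqrt τ • (B * A ^ (n - 1) + A ^ (n - 1) * B) +
          (if 3 ≤ n then τ else 0) • (B * A ^ (n - 2) * B) +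
          τ • (∑ j ∈ Finset.range (n - 1), A ^ j * B ^ 2 * A ^ (n - 2 - j)) +
          (τ * Real.sqrt τ) • D ∧
      ‖D‖ ≤ 3 ^ n * max (max ‖A‖ ‖B‖) (max ‖C‖ 1) ^ n :=
  operator_expansion_estimate_general A B C hAC hCA hABA τ hτ
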